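/- arXiv:1712.01000 — 6 statements merged into one kernel-verified Lean document; each statement's English description precedes it below -/
import Mathlib

section
/- Let B₁ and B₂ be two disjoint open balls in ℝⁿ with centers c₁, c₂ on the sphere of radius r centered at the origin, and radii r₂ ≤ r₁ < r. For any homothety coefficients k₁, k₂ with k₂ ≥ k₁ ≥ 1, the ball with center k₁·c₁ and radius k₁·r₁ is disjoint from the ball with center k₂·c₂ and radius k₂·r₂. -/
/-!
Write `d = ‖c₁ - c₂‖` and `r = ‖c₁‖ = ‖c₂‖`. Since the centers lie on a common sphere,
`‖k₁ c₁ - k₂ c₂‖² = k₁ k₂ d² + (k₂ - k₁)² r²`, and disjointness gives `d ≥ r₁ + r₂`.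
The excess of `k₁ k₂ (r₁ + r₂)² + (k₂ - k₁)² r²` over `(k₁ r₁ + k₂ r₂)²` is
`(k₂ - k₁) k₁ (r₁² - r₂²) + (k₂ - k₁)² (r² - r₂²)`, which is nonnegative because `r₂ ≤ r₁`
and `r₂ ≤ r` (the latter from `r₁ + r₂ ≤ d ≤ 2r`).
-/

open Metric

section InnerProductSpace

variable {E : Type*} [NormedAddCommGroup E] [InnerProductSpace ℝ E]

theorem norm_smul_sub_smul_sq_of_norm_eq {x y : E} (hxy : ‖x‖ = ‖y‖) (a b : ℝ) :
    ‖a • x - b • y‖ ^ 2 = a * b * ‖x - y‖ ^ 2 + (b - a) ^ 2 * ‖x‖ ^ 2 := by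
  rw [norm_sub_sq_real, norm_sub_sq_real, norm_smul, norm_smul, real_inner_smul_left,
    real_inner_smul_right, ← hxy, Real.norm_eq_abs, Real.norm_eq_abs, mul_pow, mul_pow, sq_abs,
    sq_abs]
  ring

theorem mul_add_mul_le_dist_smul_smul_of_norm_eq {c₁ c₂ : E} {r₁ r₂ k₁ k₂ : ℝ}
    (hc : ‖c₁‖ = ‖c₂‖) (hr₂ : 0 ≤ r₂) (hr₁₂ : r₂ ≤ r₁) (hd : r₁ + r₂ ≤ dist c₁ c₂)
    (hk₁ : 0 ≤ k₁) (hk : k₁ ≤ k₂) :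
    k₁ * r₁ + k₂ * r₂ ≤ dist (k₁ • c₁) (k₂ • c₂) := by
  have hr₂c : r₂ ≤ ‖c₁‖ := by linarith [dist_le_norm_add_norm c₁ c₂]
  have hsq : (k₁ * r₁ + k₂ * r₂) ^ 2 ≤ dist (k₁ • c₁) (k₂ • c₂) ^ 2 :=
    calc (k₁ * r₁ + k₂ * r₂) ^ 2
        ≤ k₁ * k₂ * (r₁ + r₂) ^ 2 + (k₂ - k₁) ^ 2 * ‖c₁‖ ^ 2 := by
          nlinarith [mul_nonneg (mul_nonneg (sub_nonneg.2 hk) hk₁)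
              (sub_nonneg.2 (pow_le_pow_left₀ hr₂ hr₁₂ 2)),
            mul_nonneg (sq_nonneg (k₂ - k₁)) (sub_nonneg.2 (pow_le_pow_left₀ hr₂ hr₂c 2))]
      _ ≤ k₁ * k₂ * dist c₁ c₂ ^ 2 + (k₂ - k₁) ^ 2 * ‖c₁‖ ^ 2 := by
          have : 0 ≤ k₁ * k₂ := mul_nonneg hk₁ (hk₁.trans hk)
          gcongr
          linarith
      _ = dist (k₁ • c₁) (k₂ • c₂) ^ 2 := by
          rw [dist_eq_norm, dist_eq_norm, norm_smul_sub_smul_sq_of_norm_eq hc]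
  exact (abs_le_of_sq_le_sq' hsq dist_nonneg).2

end InnerProductSpace

theorem stmt_0_general (n : ℕ) (c₁ c₂ : EuclideanSpace ℝ (Fin n)) (r r₁ r₂ k₁ k₂ : ℝ)
    (hc₁ : ‖c₁‖ = r) (hc₂ : ‖c₂‖ = r)
    (hr₂ : 0 < r₂) (hr₁₂ : r₂ ≤ r₁)
    (hdisj : Disjoint (Metric.ball c₁ r₁) (Metric.ball c₂ r₂))
    (hk₁ : 1 ≤ k₁) (hk : k₁ ≤ k₂) :
    Disjoint (Metric.ball (k₁ • c₁) (k₁ * r₁)) (Metric.ball (k₂ • c₂) (k₂ * r₂)) := by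
  have hd : r₁ + r₂ ≤ dist c₁ c₂ :=
    (disjoint_ball_ball_iff (hr₂.trans_le hr₁₂) hr₂).1 hdisj
  exact ball_disjoint_ball <| mul_add_mul_le_dist_smul_smul_of_norm_eq (hc₁.trans hc₂.symm)
    hr₂.le hr₁₂ hd (zero_le_one.trans hk₁) hk

theorem stmt_0 (n : ℕ) (c₁ c₂ : EuclideanSpace ℝ (Fin n)) (r r₁ r₂ k₁ k₂ : ℝ)
    (hc₁ : ‖c₁‖ = r) (hc₂ : ‖c₂‖ = r)
    (hr₂ : 0 < r₂) (hr₁₂ : r₂ ≤ r₁) (hr₁ : r₁ < r)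
    (hdisj : Disjoint (Metric.ball c₁ r₁) (Metric.ball c₂ r₂))
    (hk₁ : 1 ≤ k₁) (hk : k₁ ≤ k₂) :
    Disjoint (Metric.ball (k₁ • c₁) (k₁ * r₁)) (Metric.ball (k₂ • c₂) (k₂ * r₂)) :=
  stmt_0_general n c₁ c₂ r r₁ r₂ k₁ k₂ hc₁ hc₂ hr₂ hr₁₂ hdisj hk₁ hk
end

section
/- Let B₁ and B₂ be two disjoint open balls in ℝⁿ with centers on the sphere S(0, r) and radii r₁, r₂ < r. If both balls are scaled by homotheties centered at the origin so that they acquire the same radius r₁ (i.e., B₁ is unchanged and B₂ is scaled by factor r₁/r₂ ≥ 1), then the resulting two balls of equal radius r₁ are disjoint. -/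
/-!
For `‖u‖ = ‖v‖ = r` and `t ≥ 0` one has
`dist u (t • v) ^ 2 = t * dist u v ^ 2 + (t - 1) ^ 2 * r ^ 2`.
Disjointness gives `dist c₁ c₂ ≥ r₁ + r₂` and `r > r₁`, so with `t = r₁ / r₂` the right-hand side is
at least `t (r₁ + r₂)² + (t - 1)² r₁²`, which exceeds `(2 r₁)²` by `r₁ (r₁ + r₂) (r₁ - r₂)² / r₂²`.
-/

theorem dist_smul_sq_of_norm_eq {E : Type*} [SeminormedAddCommGroup E] [InnerProductSpace ℝ E]
    {u v : E} {r : ℝ} (hu : ‖u‖ = r) (hv : ‖v‖ = r) (t : ℝ) :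
    dist u (t • v) ^ 2 = t * dist u v ^ 2 + (t - 1) ^ 2 * r ^ 2 := by
  rw [dist_eq_norm, dist_eq_norm, norm_sub_sq_real, norm_sub_sq_real, real_inner_smul_right,
    norm_smul, mul_pow, Real.norm_eq_abs, sq_abs, hu, hv]
  ring

theorem sq_two_mul_le_div_mul_add_sq {r₁ r₂ : ℝ} (hr₁ : 0 < r₁) (hr₂ : 0 < r₂) :
    (2 * r₁) ^ 2 ≤ r₁ / r₂ * (r₁ + r₂) ^ 2 + (r₁ / r₂ - 1) ^ 2 * r₁ ^ 2 := by
  have key : r₁ / r₂ * (r₁ + r₂) ^ 2 + (r₁ / r₂ - 1) ^ 2 * r₁ ^ 2 - (2 * r₁) ^ 2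
      = r₁ * (r₁ + r₂) * (r₁ - r₂) ^ 2 / r₂ ^ 2 := by
    field_simp
    ring
  have : 0 ≤ r₁ * (r₁ + r₂) * (r₁ - r₂) ^ 2 / r₂ ^ 2 := by positivity
  linarith

theorem stmt_1 (n : ℕ) (c₁ c₂ : EuclideanSpace ℝ (Fin n)) (r r₁ r₂ : ℝ)
    (hc₁ : ‖c₁‖ = r) (hc₂ : ‖c₂‖ = r)
    (hr₂ : 0 < r₂) (hr₁₂ : r₂ ≤ r₁) (hr₁ : r₁ < r)
    (hdisj : Disjoint (Metric.ball c₁ r₁) (Metric.ball c₂ r₂)) :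
    Disjoint (Metric.ball c₁ r₁) (Metric.ball ((r₁ / r₂) • c₂) r₁) := by
  have hr₁pos : 0 < r₁ := hr₂.trans_le hr₁₂
  have hdist : r₁ + r₂ ≤ dist c₁ c₂ := (disjoint_ball_ball_iff hr₁pos hr₂).mp hdisj
  have ht : 0 ≤ r₁ / r₂ := by positivity
  have hsq : (r₁ + r₁) ^ 2 ≤ dist c₁ ((r₁ / r₂) • c₂) ^ 2 :=
    calc (r₁ + r₁) ^ 2 ≤ r₁ / r₂ * (r₁ + r₂) ^ 2 + (r₁ / r₂ - 1) ^ 2 * r₁ ^ 2 := by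
          rw [← two_mul]; exact sq_two_mul_le_div_mul_add_sq hr₁pos hr₂
      _ ≤ r₁ / r₂ * dist c₁ c₂ ^ 2 + (r₁ / r₂ - 1) ^ 2 * r ^ 2 := by
          gcongr
      _ = dist c₁ ((r₁ / r₂) • c₂) ^ 2 := (dist_smul_sq_of_norm_eq hc₁ hc₂ _).symm
  exact Metric.ball_disjoint_ball (le_of_sq_le_sq hsq dist_nonneg)
end

section
/- In ℝ², two disjoint closed balls not containing a fixed point x can generate a shadow at x: there exist two disjoint closed balls B₁, B₂ in ℝ² with x ∉ B₁ ∪ B₂ such that every line through x intersects B₁ ∪ B₂. -/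
/-!
Put the centres on two perpendicular axes through `x`: `c₁ = x + e₂` with radius `3/4` and
`c₂ = x + 4 e₁` with radius `3`. A line through `x` making angle `θ` with `e₁` lies at distance
`|cos θ|` from `c₁` and `4 |sin θ|` from `c₂`, and one of `|cos θ|`, `|sin θ|` is at most `1/√2`.
Since `3/4 > 1/√2` and `3 > 4/√2`, every line meets one of the balls, while `3/4 < 1`, `3 < 4`
and `3/4 + 3 < √17` keep `x` outside and the balls apart.
-/

open Metric EuclideanSpace
open scoped InnerProductSpace

/-- The witness `t = ⟪d, v⟫ / ‖v‖²` gives the foot of the perpendicular from `x + d` to the line,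
at squared distance `‖d‖² - ⟪d, v⟫² / ‖v‖²`. -/
theorem exists_add_smul_mem_closedBall {E : Type*} [NormedAddCommGroup E]
    [InnerProductSpace ℝ E] {x d v : E} {r : ℝ} (hv : v ≠ 0) (hr : 0 ≤ r)
    (h : ‖d‖ ^ 2 * ‖v‖ ^ 2 - ⟪d, v⟫_ℝ ^ 2 ≤ r ^ 2 * ‖v‖ ^ 2) :
    ∃ t : ℝ, x + t • v ∈ closedBall (x + d) r := by
  have hv2 : 0 < ‖v‖ ^ 2 := by positivity
  refine ⟨⟪d, v⟫_ℝ / ‖v‖ ^ 2, ?_⟩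
  rw [mem_closedBall, dist_add_left, dist_eq_norm, ← sq_le_sq₀ (norm_nonneg _) hr,
    norm_sub_sq_real, inner_smul_left, norm_smul, mul_pow, Real.norm_eq_abs, sq_abs,
    real_inner_comm d v]
  have foot_dist_sq : (⟪d, v⟫_ℝ / ‖v‖ ^ 2) ^ 2 * ‖v‖ ^ 2 - 2 * ((⟪d, v⟫_ℝ / ‖v‖ ^ 2) * ⟪d, v⟫_ℝ)
      + ‖d‖ ^ 2 = (‖d‖ ^ 2 * ‖v‖ ^ 2 - ⟪d, v⟫_ℝ ^ 2) / ‖v‖ ^ 2 := by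
    field_simp
    ring
  simpa [foot_dist_sq] using (div_le_iff₀ hv2).2 h

theorem EuclideanSpace.exists_add_smul_mem_closedBall_add_single {ι : Type*} [Fintype ι]
    [DecidableEq ι] {x v : EuclideanSpace ℝ ι} (i : ι) {s r : ℝ} (hv : v ≠ 0) (hr : 0 ≤ r)
    (h : s ^ 2 * (‖v‖ ^ 2 - v i ^ 2) ≤ r ^ 2 * ‖v‖ ^ 2) :
    ∃ t : ℝ, x + t • v ∈ closedBall (x + single i s) r := by
  refine exists_add_smul_mem_closedBall hv hr ?_
  rw [PiLp.norm_single, inner_single_left, Real.norm_eq_abs, sq_abs]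
  simpa only [conj_trivial, mul_pow, mul_sub] using h

theorem EuclideanSpace.norm_sq_eq_fin_two (v : EuclideanSpace ℝ (Fin 2)) :
    ‖v‖ ^ 2 = v 0 ^ 2 + v 1 ^ 2 := by
  rw [real_norm_sq_eq, Fin.sum_univ_two]

theorem stmt_7 (x : EuclideanSpace ℝ (Fin 2)) :
    ∃ (c₁ c₂ : EuclideanSpace ℝ (Fin 2)) (ρ₁ ρ₂ : ℝ), 0 < ρ₁ ∧ 0 < ρ₂ ∧
      Disjoint (Metric.closedBall c₁ ρ₁) (Metric.closedBall c₂ ρ₂) ∧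
      x ∉ Metric.closedBall c₁ ρ₁ ∪ Metric.closedBall c₂ ρ₂ ∧
      ∀ v : EuclideanSpace ℝ (Fin 2), v ≠ 0 →
        ∃ t : ℝ, x + t • v ∈ Metric.closedBall c₁ ρ₁ ∪ Metric.closedBall c₂ ρ₂ := by
  refine ⟨x + single 1 1, x + single 0 4, 3 / 4, 3, by norm_num, by norm_num, ?_, ?_, ?_⟩
  · refine closedBall_disjoint_closedBall ?_
    rw [dist_add_left, ← sq_lt_sq₀ (by norm_num) dist_nonneg, dist_eq_norm, norm_sq_eq_fin_two]
    norm_num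
  · rintro (hx | hx) <;> rw [mem_closedBall, dist_self_add_right, PiLp.norm_single] at hx <;>
      norm_num at hx
  · intro v hv
    have hv_sq := norm_sq_eq_fin_two v
    rcases le_total (v 0 ^ 2) (v 1 ^ 2) with hle | hle
    · obtain ⟨t, ht⟩ := exists_add_smul_mem_closedBall_add_single (x := x) (s := 1)
        (r := 3 / 4) 1 hv (by norm_num) (by rw [hv_sq]; nlinarith)
      exact ⟨t, .inl ht⟩
    · obtain ⟨t, ht⟩ := exists_add_smul_mem_closedBall_add_single (x := x) (s := 4)
        (r := 3) 0 hv (by norm_num) (by rw [hv_sq]; nlinarith)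
      exact ⟨t, .inr ht⟩
end

section
/- In ℝ², two disjoint closed balls of equal radius, not containing a fixed point x, can generate a shadow at x. -/
/-!
Put the balls of radius `ρ` at distances `d₀, d₁` from `x` along two orthonormal directions
`e₀, e₁`. The line through `x` with direction `v` meets the ball around `x + dᵢ • eᵢ` iff
`dᵢ² (‖v‖² - ⟪eᵢ, v⟫²) ≤ ρ² ‖v‖²`. In the plane `⟪e₀, v⟫² + ⟪e₁, v⟫² = ‖v‖²`, so a line missing
both balls would give `d₀² d₁² > ρ² (d₀² + d₁²)`; the balls are disjoint iff `4ρ² < d₀² + d₁²`.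
Both conditions hold for `ρ = 5`, `d₀ = 6`, `d₁ = 9`. With `d₀ = d₁` they are incompatible: the
distances must differ.
-/

open Metric
open scoped RealInnerProductSpace

variable {E : Type*} [NormedAddCommGroup E] [InnerProductSpace ℝ E]

/-- The foot of the perpendicular from the centre is at parameter `t = d ⟪e, v⟫ / ‖v‖²`, at squared
distance `d² (1 - ⟪e, v⟫² / ‖v‖²)` from the centre. -/
theorem exists_add_smul_mem_closedBall_add_smul {x e v : E} {d ρ : ℝ} (he : ‖e‖ = 1) (hv : v ≠ 0)
    (hρ : 0 ≤ ρ) (h : d ^ 2 * (‖v‖ ^ 2 - ⟪e, v⟫ ^ 2) ≤ ρ ^ 2 * ‖v‖ ^ 2) :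
    ∃ t : ℝ, x + t • v ∈ closedBall (x + d • e) ρ := by
  have hv2 : 0 < ‖v‖ ^ 2 := by positivity
  refine ⟨d * ⟪e, v⟫ / ‖v‖ ^ 2, ?_⟩
  rw [mem_closedBall, dist_eq_norm, add_sub_add_left_eq_sub, ← sq_le_sq₀ (norm_nonneg _) hρ,
    norm_sub_sq_real, norm_smul, norm_smul, he, real_inner_smul_left, real_inner_smul_right,
    real_inner_comm e v, Real.norm_eq_abs, Real.norm_eq_abs, mul_pow, mul_pow, sq_abs, sq_abs]
  calc (d * ⟪e, v⟫ / ‖v‖ ^ 2) ^ 2 * ‖v‖ ^ 2 - 2 * (d * ⟪e, v⟫ / ‖v‖ ^ 2 * (d * ⟪e, v⟫))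
        + d ^ 2 * 1 ^ 2
      = d ^ 2 * (‖v‖ ^ 2 - ⟪e, v⟫ ^ 2) / ‖v‖ ^ 2 := by field_simp; ring
    _ ≤ ρ ^ 2 := (div_le_iff₀ hv2).2 h

theorem exists_add_smul_mem_closedBall_union {b : OrthonormalBasis (Fin 2) ℝ E} {x v : E}
    {d₀ d₁ ρ : ℝ} (hv : v ≠ 0) (hρ : 0 ≤ ρ) (h : d₀ ^ 2 * d₁ ^ 2 ≤ ρ ^ 2 * (d₀ ^ 2 + d₁ ^ 2)) :
    ∃ t : ℝ, x + t • v ∈ closedBall (x + d₀ • b 0) ρ ∪ closedBall (x + d₁ • b 1) ρ := by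
  have parseval : ⟪b 0, v⟫ ^ 2 + ⟪b 1, v⟫ ^ 2 = ‖v‖ ^ 2 := by
    simpa [Fin.sum_univ_two] using b.sum_sq_inner_right v
  rcases le_or_gt (d₀ ^ 2 * ⟪b 1, v⟫ ^ 2) (ρ ^ 2 * ‖v‖ ^ 2) with h₀ | h₀
  · obtain ⟨t, ht⟩ := exists_add_smul_mem_closedBall_add_smul (x := x) (d := d₀)
      (b.orthonormal.1 0) hv hρ (by rwa [← eq_sub_of_add_eq' parseval])
    exact ⟨t, Or.inl ht⟩
  · have h₁ : d₁ ^ 2 * ⟪b 0, v⟫ ^ 2 ≤ ρ ^ 2 * ‖v‖ ^ 2 := by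
      by_contra! h₁
      have hA : 0 < d₀ ^ 2 := by nlinarith [sq_nonneg ⟪b 1, v⟫, sq_nonneg d₀]
      have hB : 0 < d₁ ^ 2 := by nlinarith [sq_nonneg ⟪b 0, v⟫, sq_nonneg d₁]
      refine lt_irrefl (d₀ ^ 2 * d₁ ^ 2 * ‖v‖ ^ 2) ?_
      calc d₀ ^ 2 * d₁ ^ 2 * ‖v‖ ^ 2
          ≤ d₁ ^ 2 * (ρ ^ 2 * ‖v‖ ^ 2) + d₀ ^ 2 * (ρ ^ 2 * ‖v‖ ^ 2) := by nlinarith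
        _ < d₁ ^ 2 * (d₀ ^ 2 * ⟪b 1, v⟫ ^ 2) + d₀ ^ 2 * (d₁ ^ 2 * ⟪b 0, v⟫ ^ 2) :=
          add_lt_add (mul_lt_mul_of_pos_left h₀ hB) (mul_lt_mul_of_pos_left h₁ hA)
        _ = d₀ ^ 2 * d₁ ^ 2 * ‖v‖ ^ 2 := by rw [← parseval]; ring
    obtain ⟨t, ht⟩ := exists_add_smul_mem_closedBall_add_smul (x := x) (d := d₁)
      (b.orthonormal.1 1) hv hρ (by rwa [← eq_sub_of_add_eq parseval])
    exact ⟨t, Or.inr ht⟩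

theorem disjoint_closedBall_add_smul {e₀ e₁ x : E} {d₀ d₁ ρ : ℝ} (he₀ : ‖e₀‖ = 1) (he₁ : ‖e₁‖ = 1)
    (h : ⟪e₀, e₁⟫ = 0) (hρ : 0 ≤ ρ) (hd : 4 * ρ ^ 2 < d₀ ^ 2 + d₁ ^ 2) :
    Disjoint (closedBall (x + d₀ • e₀) ρ) (closedBall (x + d₁ • e₁) ρ) := by
  refine closedBall_disjoint_closedBall ?_
  rw [dist_eq_norm, add_sub_add_left_eq_sub, ← pow_lt_pow_iff_left₀ (by positivity) (norm_nonneg _)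
    two_ne_zero, norm_sub_sq_real, norm_smul, norm_smul, he₀, he₁, real_inner_smul_left,
    real_inner_smul_right, h]
  simpa [sq_abs] using (by linarith : (ρ + ρ) ^ 2 < d₀ ^ 2 + d₁ ^ 2)

theorem notMem_closedBall_add_smul {x e : E} {d ρ : ℝ} (he : ‖e‖ = 1) (hd : ρ < |d|) :
    x ∉ closedBall (x + d • e) ρ := by
  simpa [dist_eq_norm, norm_smul, he] using hd

theorem stmt_9 (x : EuclideanSpace ℝ (Fin 2)) :
    ∃ (c₁ c₂ : EuclideanSpace ℝ (Fin 2)) (ρ : ℝ), 0 < ρ ∧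
      Disjoint (Metric.closedBall c₁ ρ) (Metric.closedBall c₂ ρ) ∧
      x ∉ Metric.closedBall c₁ ρ ∪ Metric.closedBall c₂ ρ ∧
      ∀ v : EuclideanSpace ℝ (Fin 2), v ≠ 0 →
        ∃ t : ℝ, x + t • v ∈ Metric.closedBall c₁ ρ ∪ Metric.closedBall c₂ ρ := by
  let b := EuclideanSpace.basisFun (Fin 2) ℝ
  have hb : ∀ i, ‖b i‖ = 1 := b.orthonormal.1
  refine ⟨x + (6 : ℝ) • b 0, x + (9 : ℝ) • b 1, 5, by norm_num,
    disjoint_closedBall_add_smul (hb 0) (hb 1) (b.orthonormal.2 (by decide)) (by norm_num)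
      (by norm_num), ?_, fun v hv ↦ exists_add_smul_mem_closedBall_union hv (by norm_num)
      (by norm_num)⟩
  rw [Set.mem_union, not_or]
  exact ⟨notMem_closedBall_add_smul (hb 0) (by norm_num),
    notMem_closedBall_add_smul (hb 1) (by norm_num)⟩
end

section
/- Let x ∈ ℝⁿ, n ≥ 2. Suppose closed balls B₁, …, B_m (m < ∞), pairwise disjoint and not containing x, generate a shadow at x. Then m ≥ n. -/
/-!
Fewer than `n` vectors `c i - x` span a proper subspace of `ℝⁿ`, so some direction `v ≠ 0` is
orthogonal to all of them. Along the line `x + ℝ v` every point is at least as far from each `c i`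
as `x` itself, and `x` lies outside every ball, so this line misses all of them.
-/

open Module Submodule

theorem exists_ne_zero_forall_inner_eq_zero {𝕜 E ι : Type*} [RCLike 𝕜] [NormedAddCommGroup E]
    [InnerProductSpace 𝕜 E] [FiniteDimensional 𝕜 E] [Fintype ι] (u : ι → E)
    (h : Fintype.card ι < finrank 𝕜 E) : ∃ v ≠ 0, ∀ i, inner 𝕜 (u i) v = 0 := by
  set K := span 𝕜 (Set.range u)
  have hK : K ≠ ⊤ := fun hK => by
    have hrank : finrank 𝕜 K ≤ Fintype.card ι := finrank_range_le_card u
    rw [hK, finrank_top] at hrank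
    omega
  obtain ⟨v, hvK, hv0⟩ := exists_mem_ne_zero_of_ne_bot (mt orthogonal_eq_bot_iff.mp hK)
  exact ⟨v, hv0, fun i => (mem_orthogonal K v).mp hvK _ (subset_span ⟨i, rfl⟩)⟩

theorem dist_le_dist_add_smul_of_inner_eq_zero {F : Type*} [NormedAddCommGroup F]
    [InnerProductSpace ℝ F] {x c v : F} (h : inner ℝ (c - x) v = 0) (t : ℝ) :
    dist x c ≤ dist (x + t • v) c := by
  have horth : inner ℝ (x - c) (t • v) = 0 := by
    rw [real_inner_smul_right, ← neg_sub, inner_neg_left, h, neg_zero, mul_zero]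
  have hpyth : dist (x + t • v) c * dist (x + t • v) c =
      dist x c * dist x c + ‖t • v‖ * ‖t • v‖ := by
    rw [dist_eq_norm, dist_eq_norm, add_sub_right_comm,
      norm_add_sq_eq_norm_sq_add_norm_sq_real horth]
  exact (mul_self_le_mul_self_iff dist_nonneg dist_nonneg).mpr
    (hpyth ▸ le_add_of_nonneg_right (mul_self_nonneg _))

theorem stmt_10_general (n : ℕ) (x : EuclideanSpace ℝ (Fin n)) (m : ℕ)
    (c : Fin m → EuclideanSpace ℝ (Fin n)) (ρ : Fin m → ℝ)
    (hx : ∀ i, x ∉ Metric.closedBall (c i) (ρ i))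
    (hshadow : ∀ v : EuclideanSpace ℝ (Fin n), v ≠ 0 →
      ∃ (i : Fin m) (t : ℝ), x + t • v ∈ Metric.closedBall (c i) (ρ i)) :
    n ≤ m := by
  by_contra! hm
  obtain ⟨v, hv0, hv⟩ := exists_ne_zero_forall_inner_eq_zero (𝕜 := ℝ) (fun i => c i - x)
    (by rwa [Fintype.card_fin, finrank_euclideanSpace_fin])
  obtain ⟨i, t, ht⟩ := hshadow v hv0
  exact hx i (Metric.mem_closedBall.mpr
    ((dist_le_dist_add_smul_of_inner_eq_zero (hv i) t).trans (Metric.mem_closedBall.mp ht)))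

theorem stmt_10 (n : ℕ) (hn : 2 ≤ n) (x : EuclideanSpace ℝ (Fin n)) (m : ℕ)
    (c : Fin m → EuclideanSpace ℝ (Fin n)) (ρ : Fin m → ℝ)
    (hρ : ∀ i, 0 < ρ i)
    (hdisj : ∀ i j, i ≠ j →
      Disjoint (Metric.closedBall (c i) (ρ i)) (Metric.closedBall (c j) (ρ j)))
    (hx : ∀ i, x ∉ Metric.closedBall (c i) (ρ i))
    (hshadow : ∀ v : EuclideanSpace ℝ (Fin n), v ≠ 0 →
      ∃ (i : Fin m) (t : ℝ), x + t • v ∈ Metric.closedBall (c i) (ρ i)) :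
    n ≤ m :=
  stmt_10_general n x m c ρ hx hshadow
end

section
/- Suppose in ℝⁿ there exist m pairwise disjoint open balls B(c_i, r_i), not containing a fixed point x, whose centers lie on a common sphere S(x, R) centered at x, and which generate a shadow at x. Then, replacing each ball by its homothetic image with center x and coefficient k_i = r₁/r_i (where r₁ = max radius), one obtains m pairwise disjoint open balls of equal radius r₁, not containing x, that still generate a shadow at x. -/
/-!
The homothety with center `x` and ratio `k > 0` multiplies distances by `k` and fixes `x` and every
line through `x`, so the rescaled balls still avoid `x` and still cast a shadow at `x`. Only
disjointness needs an argument, since different balls are rescaled by different ratios: for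
`u = c₁ - x`, `v = c₂ - x` of equal norm `R`,
`‖r₂ • u - r₁ • v‖² = (r₁ - r₂)² R² + r₁ r₂ ‖u - v‖² ≥ r₁ r₂ (r₁ + r₂)² ≥ (2 r₁ r₂)²`,
which after dividing by `r₁ r₂ / ρ` says the new centers are at least `2ρ` apart.
-/

open Metric

section Homothety

variable {E : Type*} [SeminormedAddCommGroup E] [NormedSpace ℝ E]

lemma dist_add_smul_sub_add_smul_sub (x y z : E) (k : ℝ) :
    dist (x + k • (y - x)) (x + k • (z - x)) = |k| * dist y z := by
  rw [dist_eq_norm, dist_eq_norm, ← Real.norm_eq_abs, ← norm_smul]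
  congr 1
  module

lemma add_smul_sub_mem_ball_iff {x y c : E} {k ρ : ℝ} (hk : 0 < k) :
    x + k • (y - x) ∈ ball (x + k • (c - x)) (k * ρ) ↔ y ∈ ball c ρ := by
  rw [mem_ball, mem_ball, dist_add_smul_sub_add_smul_sub, abs_of_pos hk, mul_lt_mul_iff_right₀ hk]

end Homothety

section Disjoint

variable {E : Type*} [NormedAddCommGroup E] [InnerProductSpace ℝ E]

lemma two_mul_mul_le_norm_smul_sub_smul {u v : E} {a b : ℝ} (ha : 0 ≤ a) (hb : 0 ≤ b)
    (huv : ‖u‖ = ‖v‖) (hsep : a + b ≤ ‖u - v‖) :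
    2 * a * b ≤ ‖b • u - a • v‖ := by
  have hsq : ‖b • u - a • v‖ ^ 2 = (a - b) ^ 2 * ‖u‖ ^ 2 + a * b * ‖u - v‖ ^ 2 := by
    rw [norm_sub_sq_real, norm_sub_sq_real, norm_smul, norm_smul, real_inner_smul_left,
      real_inner_smul_right, Real.norm_eq_abs, Real.norm_eq_abs, abs_of_nonneg ha,
      abs_of_nonneg hb, ← huv]
    ring
  have hab : 0 ≤ a * b := mul_nonneg ha hb
  refine (pow_le_pow_iff_left₀ (by positivity) (norm_nonneg _) two_ne_zero).mp ?_
  calc (2 * a * b) ^ 2 = a * b * (4 * a * b) := by ring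
    _ ≤ a * b * (a + b) ^ 2 := by gcongr; linarith [sq_nonneg (a - b)]
    _ ≤ a * b * ‖u - v‖ ^ 2 := by gcongr
    _ ≤ ‖b • u - a • v‖ ^ 2 := by
      rw [hsq]; linarith [mul_nonneg (sq_nonneg (a - b)) (sq_nonneg ‖u‖)]

lemma disjoint_ball_add_smul_sub {x c₁ c₂ : E} {r₁ r₂ ρ : ℝ} (h₁ : 0 < r₁) (h₂ : 0 < r₂)
    (hρ : 0 ≤ ρ) (hc : ‖c₁ - x‖ = ‖c₂ - x‖) (hd : Disjoint (ball c₁ r₁) (ball c₂ r₂)) :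
    Disjoint (ball (x + (ρ / r₁) • (c₁ - x)) ρ) (ball (x + (ρ / r₂) • (c₂ - x)) ρ) := by
  have hsep : r₁ + r₂ ≤ ‖(c₁ - x) - (c₂ - x)‖ := by
    rw [sub_sub_sub_cancel_right, ← dist_eq_norm]
    exact (disjoint_ball_ball_iff h₁ h₂).mp hd
  have hcenters : x + (ρ / r₁) • (c₁ - x) - (x + (ρ / r₂) • (c₂ - x))
      = (ρ / (r₁ * r₂)) • (r₂ • (c₁ - x) - r₁ • (c₂ - x)) := by
    have e₁ : ρ / (r₁ * r₂) * r₂ = ρ / r₁ := by field_simp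
    have e₂ : ρ / (r₁ * r₂) * r₁ = ρ / r₂ := by field_simp
    rw [smul_sub (ρ / (r₁ * r₂)), smul_smul, smul_smul, e₁, e₂]
    module
  apply ball_disjoint_ball
  rw [dist_eq_norm, hcenters, norm_smul, Real.norm_of_nonneg (by positivity)]
  calc ρ + ρ = ρ / (r₁ * r₂) * (2 * r₁ * r₂) := by field_simp; ring
    _ ≤ ρ / (r₁ * r₂) * ‖r₂ • (c₁ - x) - r₁ • (c₂ - x)‖ := by
      gcongr
      exact two_mul_mul_le_norm_smul_sub_smul h₁.le h₂.le hc hsep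

end Disjoint

theorem stmt_11_general (n m : ℕ) (x : EuclideanSpace ℝ (Fin n)) (R : ℝ)
    (c : Fin m → EuclideanSpace ℝ (Fin n)) (r : Fin m → ℝ) (i₀ : Fin m)
    (hr : ∀ i, 0 < r i) (hR : ∀ i, ‖c i - x‖ = R)
    (hdisj : ∀ i j, i ≠ j →
      Disjoint (Metric.ball (c i) (r i)) (Metric.ball (c j) (r j)))
    (hx : ∀ i, x ∉ Metric.ball (c i) (r i))
    (hshadow : ∀ v : EuclideanSpace ℝ (Fin n), v ≠ 0 →
      ∃ (i : Fin m) (t : ℝ), x + t • v ∈ Metric.ball (c i) (r i)) :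
    (∀ i j, i ≠ j →
      Disjoint (Metric.ball (x + (r i₀ / r i) • (c i - x)) (r i₀))
        (Metric.ball (x + (r i₀ / r j) • (c j - x)) (r i₀))) ∧
    (∀ i, x ∉ Metric.ball (x + (r i₀ / r i) • (c i - x)) (r i₀)) ∧
    (∀ v : EuclideanSpace ℝ (Fin n), v ≠ 0 →
      ∃ (i : Fin m) (t : ℝ), x + t • v ∈ Metric.ball (x + (r i₀ / r i) • (c i - x)) (r i₀)) := by
  have mem_iff (i : Fin m) (y : EuclideanSpace ℝ (Fin n)) :
      x + (r i₀ / r i) • (y - x) ∈ ball (x + (r i₀ / r i) • (c i - x)) (r i₀) ↔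
        y ∈ ball (c i) (r i) := by
    have h := add_smul_sub_mem_ball_iff (x := x) (y := y) (c := c i) (ρ := r i)
      (div_pos (hr i₀) (hr i))
    rwa [div_mul_cancel₀ _ (hr i).ne'] at h
  refine ⟨fun i j hij => ?_, fun i => ?_, fun v hv => ?_⟩
  · exact disjoint_ball_add_smul_sub (hr i) (hr j) (hr i₀).le ((hR i).trans (hR j).symm)
      (hdisj i j hij)
  · simpa using (mem_iff i x).not.mpr (hx i)
  · obtain ⟨i, t, ht⟩ := hshadow v hv
    refine ⟨i, r i₀ / r i * t, ?_⟩
    simpa [mul_smul] using (mem_iff i (x + t • v)).mpr ht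

theorem stmt_11 (n m : ℕ) (x : EuclideanSpace ℝ (Fin n)) (R : ℝ)
    (c : Fin m → EuclideanSpace ℝ (Fin n)) (r : Fin m → ℝ) (i₀ : Fin m)
    (hr : ∀ i, 0 < r i) (hR : ∀ i, ‖c i - x‖ = R) (hrR : ∀ i, r i < R)
    (hmax : ∀ i, r i ≤ r i₀)
    (hdisj : ∀ i j, i ≠ j →
      Disjoint (Metric.ball (c i) (r i)) (Metric.ball (c j) (r j)))
    (hx : ∀ i, x ∉ Metric.ball (c i) (r i))
    (hshadow : ∀ v : EuclideanSpace ℝ (Fin n), v ≠ 0 →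
      ∃ (i : Fin m) (t : ℝ), x + t • v ∈ Metric.ball (c i) (r i)) :
    (∀ i j, i ≠ j →
      Disjoint (Metric.ball (x + (r i₀ / r i) • (c i - x)) (r i₀))
        (Metric.ball (x + (r i₀ / r j) • (c j - x)) (r i₀))) ∧
    (∀ i, x ∉ Metric.ball (x + (r i₀ / r i) • (c i - x)) (r i₀)) ∧
    (∀ v : EuclideanSpace ℝ (Fin n), v ≠ 0 →
      ∃ (i : Fin m) (t : ℝ), x + t • v ∈ Metric.ball (x + (r i₀ / r i) • (c i - x)) (r i₀)) :=
  stmt_11_general n m x R c r i₀ hr hR hdisj hx hshadow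
end
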